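/- arXiv:2212.12705 — 2 statements merged into one kernel-verified Lean document; each statement's English description precedes it below -/
import Mathlib

section
/- The generating function identity ∑_{n≥0} c₁(n) qⁿ = (q⁴;q⁴)_∞ / (q;q)_∞ holds, where c₁(n) counts partitions of n in which either all parts are distinct, or there is an odd repeated part 2j−1 with all positive integers less than 2j−1 repeated and all parts greater than 2j distinct. -/
open PowerSeries Finset

def mult {n : ℕ} (p : Nat.Partition n) (k : ℕ) : ℕ := p.parts.count k

noncomputable def c1 (n : ℕ) : ℕ := Nat.card {p : Nat.Partition n //
  (∀ k, mult p k ≤ 1) ∨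
  (∃ j : ℕ, 1 ≤ j ∧ 2 ≤ mult p (2*j - 1) ∧
    (∀ i, 1 ≤ i → i < 2*j - 1 → 2 ≤ mult p i) ∧
    (∀ k, 2*j < k → mult p k ≤ 1))}

/-!
Removing the staircase `1, 1, 2, 2, …, 2j-1, 2j-1` from a partition counted by the second clause
of `c1` leaves an arbitrary partition whose parts larger than `2j` are distinct. Hence
`∑ c₁(n) qⁿ = (-q;q)_∞ + ∑_{j ≥ 1} q^{2·C(2j,2)} (-q^{2j+1};q)_∞ / (q;q)_{2j}`, and multiplying by
`(q;q)_∞` gives `(q²;q²)_∞ + ∑_{j ≥ 1} q^{2·C(2j,2)} (q^{4j+2};q²)_∞`.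

On the other side `(q⁴;q⁴)_∞ = (-y;y)_∞ (y;y)_∞` with `y = q²`, and the `q`-binomial theorem
`(-y;y)_m = ∑_r y^{C(r+1,2)} [m, r]_y` turns this into `∑_r y^{C(r+1,2)} (y^{r+1};y)_∞`. The terms
`r = 2j-1` and `r = 2j` add up to `y^{C(2j,2)} (y^{2j+1};y)_∞`, which is the series above.

All products are truncated at `n`, which does not change the coefficients up to `qⁿ`.
-/

open scoped PowerSeries.WithPiTopology

theorem dvd_prod_sub_one {R ι : Type*} [CommRing R] {a : R} {s : Finset ι} {f : ι → R}
    (h : ∀ i ∈ s, a ∣ f i - 1) : a ∣ ∏ i ∈ s, f i - 1 := by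
  rw [← Ideal.mem_span_singleton, ← Ideal.Quotient.eq, map_prod, map_one]
  exact prod_eq_one fun i hi => by
    rw [← map_one (Ideal.Quotient.mk _), Ideal.Quotient.eq, Ideal.mem_span_singleton]
    exact h i hi

theorem prod_Ioc_eq_mul_prod_Ioc_succ {M : Type*} [CommMonoid M] {a b : ℕ} (h : a < b)
    (f : ℕ → M) : ∏ i ∈ Ioc a b, f i = f (a + 1) * ∏ i ∈ Ioc (a + 1) b, f i := by
  rw [← prod_Ioc_consecutive f (Nat.le_succ a) h, Nat.Ioc_succ_singleton, prod_singleton]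

theorem sum_range_two_mul_add_one {M : Type*} [AddCommMonoid M] (g : ℕ → M) (m : ℕ) :
    ∑ r ∈ range (2 * m + 1), g r = g 0 + ∑ j ∈ Icc 1 m, (g (2 * j - 1) + g (2 * j)) := by
  induction m with
  | zero => simp
  | succ m ih =>
    rw [show 2 * (m + 1) + 1 = 2 * m + 1 + 1 + 1 by ring, sum_range_succ, sum_range_succ, ih,
      sum_Icc_succ_top (by omega), show 2 * (m + 1) - 1 = 2 * m + 1 by omega,
      show 2 * (m + 1) = 2 * m + 1 + 1 by ring, add_assoc, add_assoc]

theorem choose_two_succ_succ (r : ℕ) : (r + 2).choose 2 = (r + 1).choose 2 + (r + 1) := by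
  rw [Nat.choose_succ_succ' (r + 1) 1, Nat.choose_one_right, add_comm]

theorem le_choose_two_succ : ∀ r : ℕ, r ≤ (r + 1).choose 2
  | 0 => le_rfl
  | r + 1 => by rw [choose_two_succ_succ]; omega

theorem sum_Ioc_zero_id (k : ℕ) : ∑ i ∈ Ioc 0 k, i = (k + 1).choose 2 := by
  induction k with
  | zero => rfl
  | succ k ih => rw [sum_Ioc_succ_top (Nat.zero_le k), ih, choose_two_succ_succ]

section QBinomial

variable {R : Type*} [CommRing R] (x : R)

noncomputable def qBinomial : ℕ → ℕ → R
  | _, 0 => 1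
  | 0, _ + 1 => 0
  | n + 1, k + 1 => qBinomial n (k + 1) + x ^ (n - k) * qBinomial n k

theorem qBinomial_eq_zero_of_lt : ∀ {n k : ℕ}, n < k → qBinomial x n k = 0
  | 0, _ + 1, _ => rfl
  | n + 1, k + 1, h => by
    rw [qBinomial, qBinomial_eq_zero_of_lt (by omega), qBinomial_eq_zero_of_lt (by omega),
      mul_zero, add_zero]

theorem qBinomial_mul_prod_one_sub_pow : ∀ {n k : ℕ}, k ≤ n →
    qBinomial x n k * ∏ i ∈ Ioc 0 k, (1 - x ^ i) = ∏ i ∈ Ioc (n - k) n, (1 - x ^ i)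
  | n, 0, _ => by simp [qBinomial]
  | n + 1, k + 1, h => by
    have hlow := qBinomial_mul_prod_one_sub_pow (Nat.le_of_succ_le_succ h)
    rw [qBinomial, add_mul, prod_Ioc_succ_top (Nat.zero_le k),
      show n + 1 - (k + 1) = n - k by omega, prod_Ioc_succ_top (by omega)]
    rcases Nat.lt_or_ge k n with hkn | hkn
    · have hup := qBinomial_mul_prod_one_sub_pow hkn
      have hbot : ∏ i ∈ Ioc (n - (k + 1)) n, (1 - x ^ i) =
          (1 - x ^ (n - k)) * ∏ i ∈ Ioc (n - k) n, (1 - x ^ i) := by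
        rw [prod_Ioc_eq_mul_prod_Ioc_succ (by omega), show n - (k + 1) + 1 = n - k by omega]
      rw [prod_Ioc_succ_top (Nat.zero_le k), hbot] at hup
      have hx : x ^ (n - k) * x ^ (k + 1) = x ^ (n + 1) := by rw [← pow_add]; congr 1; omega
      linear_combination hup + x ^ (n - k) * (1 - x ^ (k + 1)) * hlow -
        (∏ i ∈ Ioc (n - k) n, (1 - x ^ i)) * hx
    · obtain rfl : k = n := by omega
      rw [qBinomial_eq_zero_of_lt x (Nat.lt_succ_self k), Nat.sub_self, pow_zero]
      rw [Nat.sub_self] at hlow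
      linear_combination (1 - x ^ (k + 1)) * hlow

theorem prod_one_add_pow_eq_sum_qBinomial (m : ℕ) :
    ∏ i ∈ Ioc 0 m, (1 + x ^ i) = ∑ r ∈ range (m + 1), x ^ (r + 1).choose 2 * qBinomial x m r := by
  induction m with
  | zero => simp [qBinomial]
  | succ m ih =>
    have hshift := sum_range_succ' (fun r => x ^ (r + 1).choose 2 * qBinomial x m r) (m + 1)
    rw [sum_range_succ, qBinomial_eq_zero_of_lt x (Nat.lt_succ_self m), mul_zero,
      add_zero] at hshift
    have hstep : ∀ r ∈ range (m + 1), x ^ (r + 2).choose 2 * qBinomial x (m + 1) (r + 1) =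
        x ^ (r + 2).choose 2 * qBinomial x m (r + 1) +
          x ^ (m + 1) * (x ^ (r + 1).choose 2 * qBinomial x m r) := by
      intro r hr
      have hx : x ^ (r + 2).choose 2 * x ^ (m - r) = x ^ (m + 1) * x ^ (r + 1).choose 2 := by
        rw [← pow_add, ← pow_add, choose_two_succ_succ]
        congr 1
        have := mem_range.mp hr
        omega
      rw [qBinomial]
      linear_combination qBinomial x m r * hx
    rw [sum_range_succ', sum_congr rfl hstep, sum_add_distrib, ← mul_sum,
      prod_Ioc_succ_top (Nat.zero_le m), ih]
    simp only [qBinomial, zero_add, mul_one] at hshift ⊢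
    rw [Nat.choose_eq_zero_of_lt (by norm_num : 1 < 2), pow_zero] at hshift ⊢
    linear_combination hshift

theorem prod_one_sub_pow_two_mul_eq_sum (n : ℕ) :
    ∏ i ∈ Ioc 0 n, (1 - x ^ (2 * i)) = ∑ r ∈ range (n + 1),
      x ^ (r + 1).choose 2 * ((∏ i ∈ Ioc (n - r) n, (1 - x ^ i)) * ∏ i ∈ Ioc r n, (1 - x ^ i)) := by
  have hsplit : ∏ i ∈ Ioc 0 n, (1 - x ^ (2 * i)) =
      (∏ i ∈ Ioc 0 n, (1 + x ^ i)) * ∏ i ∈ Ioc 0 n, (1 - x ^ i) := by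
    rw [← prod_mul_distrib]
    exact prod_congr rfl fun i _ => by ring
  rw [hsplit, prod_one_add_pow_eq_sum_qBinomial, sum_mul]
  refine sum_congr rfl fun r hr => ?_
  have hr : r ≤ n := Nat.lt_succ_iff.mp (mem_range.mp hr)
  rw [← qBinomial_mul_prod_one_sub_pow x hr, ← prod_Ioc_consecutive _ (Nat.zero_le r) hr]
  ring

end QBinomial

section PowerSeriesCongruences

variable {R : Type*} [CommRing R]

theorem coeff_eq_of_X_pow_dvd_sub {f g : R⟦X⟧} {n : ℕ} (h : X ^ (n + 1) ∣ f - g) :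
    coeff n f = coeff n g :=
  sub_eq_zero.mp (map_sub (coeff n) f g ▸ X_pow_dvd_iff.mp h n (Nat.lt_succ_self n))

theorem X_pow_dvd_prod_one_sub_X_pow_sub_one {c : ℕ} {s : Finset ℕ}
    {e : ℕ → ℕ} (h : ∀ i ∈ s, c ≤ e i) : (X : R⟦X⟧) ^ c ∣ ∏ i ∈ s, (1 - X ^ e i) - 1 :=
  dvd_prod_sub_one fun i hi => by
    rw [sub_sub_cancel_left]
    exact (pow_dvd_pow X (h i hi)).neg_right

theorem X_pow_dvd_sub_prod_range_of_hasProd [TopologicalSpace R] [DiscreteTopology R]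
    {F : ℕ → R⟦X⟧} {G : R⟦X⟧} (hG : HasProd F G) (hF : ∀ i, X ^ (i + 1) ∣ F i - 1) (n : ℕ) :
    X ^ (n + 1) ∣ G - ∏ i ∈ range n, F i := by
  refine X_pow_dvd_iff.mpr fun d hd => ?_
  rw [HasProd, WithPiTopology.tendsto_iff_coeff_tendsto, SummationFilter.unconditional_filter] at hG
  obtain ⟨s, hs⟩ := Filter.eventually_atTop.mp (Filter.tendsto_pure.mp (nhds_discrete R ▸ hG d))
  have htail : X ^ (n + 1) ∣ ∏ i ∈ s ∪ range n, F i - ∏ i ∈ range n, F i := by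
    rw [← prod_sdiff subset_union_right, ← sub_one_mul]
    refine Dvd.dvd.mul_right (dvd_prod_sub_one fun i hi => (pow_dvd_pow X ?_).trans (hF i)) _
    simp only [mem_sdiff, mem_range] at hi
    omega
  rw [map_sub, ← hs _ subset_union_left, ← map_sub, X_pow_dvd_iff.mp htail d hd]

noncomputable def eulerTerm (n r : ℕ) : R⟦X⟧ :=
  X ^ (2 * (r + 1).choose 2) * ∏ i ∈ Ioc r n, (1 - X ^ (2 * i))

theorem X_pow_dvd_prod_one_sub_X_pow_four_mul_sub_sum_eulerTerm (n : ℕ) :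
    (X : R⟦X⟧) ^ (n + 1) ∣
      ∏ i ∈ Ioc 0 n, (1 - X ^ (4 * i)) - ∑ r ∈ range (n + 1), eulerTerm n r := by
  have hexact := prod_one_sub_pow_two_mul_eq_sum ((X : R⟦X⟧) ^ 2) n
  simp only [← pow_mul, show ∀ i, 2 * (2 * i) = 4 * i by intro i; ring] at hexact
  rw [hexact, ← sum_sub_distrib]
  refine dvd_sum fun r hr => ?_
  have hr : r ≤ n := Nat.lt_succ_iff.mp (mem_range.mp hr)
  -- every factor of `∏_{n-r < i ≤ n} (1 - X^{2i})` is `1` modulo `X^{2(n-r+1)}`, and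
  -- `2·C(r+1,2) ≥ 2r`
  have hfactor : (X : R⟦X⟧) ^ (n + 1) ∣
      X ^ (2 * (r + 1).choose 2) * (∏ i ∈ Ioc (n - r) n, (1 - X ^ (2 * i)) - 1) := by
    have h1 := X_pow_dvd_prod_one_sub_X_pow_sub_one (R := R) (c := 2 * (n - r + 1))
      (s := Ioc (n - r) n) (e := fun i => 2 * i) fun i hi => by simp only [mem_Ioc] at hi; omega
    have h2 := mul_dvd_mul_left ((X : R⟦X⟧) ^ (2 * (r + 1).choose 2)) h1
    rw [← pow_add] at h2
    exact (pow_dvd_pow X (by have := le_choose_two_succ r; omega)).trans h2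
  convert hfactor.mul_right (∏ i ∈ Ioc r n, (1 - (X : R⟦X⟧) ^ (2 * i))) using 1
  rw [eulerTerm]
  ring

theorem X_pow_dvd_eulerTerm_of_lt {n r : ℕ} (h : n < r) : (X : R⟦X⟧) ^ (n + 1) ∣ eulerTerm n r :=
  (pow_dvd_pow X (by have := le_choose_two_succ r; omega)).mul_right _

theorem X_pow_dvd_eulerTerm_add_eulerTerm_succ_sub (n r : ℕ) :
    (X : R⟦X⟧) ^ (n + 1) ∣ eulerTerm n r + eulerTerm n (r + 1) -
      X ^ (2 * (r + 1).choose 2) * ∏ i ∈ Ioc (r + 1) n, (1 - X ^ (2 * i)) := by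
  rw [eulerTerm, eulerTerm, choose_two_succ_succ]
  rcases le_or_gt (r + 1) n with hrn | hrn
  · rw [prod_Ioc_eq_mul_prod_Ioc_succ hrn]
    convert dvd_zero _ using 1
    rw [mul_add, pow_add]
    ring
  · rw [Ioc_eq_empty (by omega), Ioc_eq_empty (by omega), prod_empty, mul_one, mul_one,
      add_sub_cancel_left]
    exact pow_dvd_pow X (by omega)

theorem X_pow_dvd_prod_one_sub_X_pow_four_mul_sub (n : ℕ) :
    (X : R⟦X⟧) ^ (n + 1) ∣ ∏ i ∈ Ioc 0 n, (1 - X ^ (4 * i)) -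
      (∏ i ∈ Ioc 0 n, (1 - X ^ (2 * i)) +
        ∑ j ∈ Icc 1 n, X ^ (2 * (2 * j).choose 2) * ∏ i ∈ Ioc (2 * j) n, (1 - X ^ (2 * i))) := by
  have htail : (X : R⟦X⟧) ^ (n + 1) ∣ ∑ r ∈ Ico (n + 1) (2 * n + 1), eulerTerm n r :=
    dvd_sum fun r hr => X_pow_dvd_eulerTerm_of_lt (mem_Ico.mp hr).1
  have hpair : ∀ j ∈ Icc 1 n, (X : R⟦X⟧) ^ (n + 1) ∣ eulerTerm n (2 * j - 1) + eulerTerm n (2 * j) -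
      X ^ (2 * (2 * j).choose 2) * ∏ i ∈ Ioc (2 * j) n, (1 - X ^ (2 * i)) := fun j hj => by
    have h := X_pow_dvd_eulerTerm_add_eulerTerm_succ_sub (R := R) n (2 * j - 1)
    rwa [show 2 * j - 1 + 1 = 2 * j by simp only [mem_Icc] at hj; omega] at h
  have hsplit := sum_range_two_mul_add_one (eulerTerm (R := R) n) n
  rw [← sum_range_add_sum_Ico _ (by omega : n + 1 ≤ 2 * n + 1)] at hsplit
  have h0 : eulerTerm (R := R) n 0 = ∏ i ∈ Ioc 0 n, (1 - X ^ (2 * i)) := by simp [eulerTerm]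
  convert dvd_add (dvd_sub (X_pow_dvd_prod_one_sub_X_pow_four_mul_sub_sum_eulerTerm n) htail)
    (dvd_sum hpair) using 1
  rw [sum_sub_distrib]
  linear_combination hsplit + h0

end PowerSeriesCongruences

namespace Nat.Partition

theorem sum_le_of_le_parts {n : ℕ} {s : Multiset ℕ} (p : n.Partition) (h : s ≤ p.parts) :
    s.sum ≤ n := by
  obtain ⟨u, hu⟩ := Multiset.le_iff_exists_add.mp h
  rw [← p.parts_sum, hu, Multiset.sum_add]
  exact Nat.le_add_right _ _

theorem card_filter_le_parts {n : ℕ} (s : Multiset ℕ) (hs : ∀ i ∈ s, 0 < i) (hsn : s.sum ≤ n)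
    (P : Multiset ℕ → Prop) [DecidablePred P] :
    #(univ.filter fun p : n.Partition => s ≤ p.parts ∧ P (p.parts - s)) =
      #(univ.filter fun q : (n - s.sum).Partition => P q.parts) := by
  refine card_bij'
    (fun p hp => ⟨p.parts - s,
      fun hi => p.parts_pos (Multiset.mem_of_le (Multiset.sub_le_self _ _) hi), ?_⟩)
    (fun q _ => ⟨q.parts + s, fun hi => (Multiset.mem_add.mp hi).elim q.parts_pos (hs _), by
      rw [Multiset.sum_add, q.parts_sum]; omega⟩) ?_ ?_ ?_ ?_
  · have := congrArg Multiset.sum (tsub_add_cancel_of_le (mem_filter.mp hp).2.1)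
    rw [Multiset.sum_add, p.parts_sum] at this
    omega
  · intro p hp
    exact mem_filter.mpr ⟨mem_univ _, (mem_filter.mp hp).2.2⟩
  · intro q hq
    simpa using hq
  · intro p hp
    ext1
    exact tsub_add_cancel_of_le (mem_filter.mp hp).2.1
  · intro q _
    ext1
    exact add_tsub_cancel_right _ _

theorem mk_card_filter_le_parts (R : Type*) [Semiring R] (s : Multiset ℕ) (hs : ∀ i ∈ s, 0 < i)
    (P : Multiset ℕ → Prop) [DecidablePred P] :
    PowerSeries.mk (fun n : ℕ =>
        (#(univ.filter fun p : n.Partition => s ≤ p.parts ∧ P (p.parts - s)) : R)) =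
      X ^ s.sum *
        PowerSeries.mk fun n : ℕ => (#(univ.filter fun q : n.Partition => P q.parts) : R) := by
  ext n
  rw [coeff_mk, coeff_X_pow_mul', coeff_mk]
  split_ifs with hsn
  · rw [card_filter_le_parts s hs hsn]
  · rw [Finset.card_eq_zero.mpr, Nat.cast_zero]
    exact filter_eq_empty_iff.mpr fun p _ hp => hsn (sum_le_of_le_parts p hp.1)

def distinctsAbove (n k : ℕ) : Finset n.Partition :=
  univ.filter fun p => ∀ i ∈ p.parts, k < i → p.parts.count i ≤ 1

def staircase (k : ℕ) : Multiset ℕ := 2 • (Ioc 0 k).val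

theorem count_staircase (k i : ℕ) : (staircase k).count i = if i ∈ Ioc 0 k then 2 else 0 := by
  rw [staircase, Multiset.count_nsmul, Multiset.count_eq_of_nodup (Ioc 0 k).nodup]
  simp only [mem_val]
  split_ifs <;> rfl

theorem sum_staircase (k : ℕ) : (staircase k).sum = 2 * (k + 1).choose 2 := by
  rw [staircase, Multiset.sum_nsmul, smul_eq_mul, ← sum_Ioc_zero_id, sum_eq_multiset_sum,
    Multiset.map_id']

theorem staircase_le_iff {k : ℕ} {s : Multiset ℕ} :
    staircase k ≤ s ↔ ∀ i ∈ Ioc 0 k, 2 ≤ s.count i := by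
  simp only [Multiset.le_iff_count, count_staircase]
  refine ⟨fun h i hi => by simpa [hi] using h i, fun h i => ?_⟩
  split_ifs with hi
  exacts [h i hi, Nat.zero_le _]

def staircaseDistinctsAbove (n k : ℕ) : Finset n.Partition :=
  univ.filter fun p => staircase k ≤ p.parts ∧ ∀ i ∈ p.parts, k + 1 < i → p.parts.count i ≤ 1

theorem count_sub_staircase_of_lt {k i : ℕ} (s : Multiset ℕ) (hi : k < i) :
    (s - staircase k).count i = s.count i := by
  rw [Multiset.count_sub, count_staircase, if_neg fun h => by simp only [mem_Ioc] at h; omega,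
    Nat.sub_zero]

theorem mk_card_staircaseDistinctsAbove (R : Type*) [Semiring R] (k : ℕ) :
    PowerSeries.mk (fun n => (#(staircaseDistinctsAbove n k) : R)) =
      X ^ (2 * (k + 1).choose 2) * PowerSeries.mk fun n => (#(distinctsAbove n (k + 1)) : R) := by
  simp only [distinctsAbove]
  rw [← sum_staircase, ← mk_card_filter_le_parts R (staircase k)
    (fun i hi => (mem_Ioc.mp (Multiset.mem_nsmul.mp hi).2).1)
    (fun q => ∀ i ∈ q, k + 1 < i → q.count i ≤ 1)]
  ext n
  simp only [coeff_mk]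
  congr 2
  refine filter_congr fun p _ => and_congr_right' <| forall_congr' fun i => ?_
  by_cases hi : k + 1 < i
  · simp only [← Multiset.count_pos, count_sub_staircase_of_lt _ (Nat.lt_of_succ_lt hi)]
  · simp [hi]

theorem disjoint_distinctsAbove_zero_staircaseDistinctsAbove {m k : ℕ} (hk : 0 < k) :
    Disjoint (distinctsAbove m 0) (staircaseDistinctsAbove m k) := by
  refine disjoint_left.mpr fun p hd hs => ?_
  simp only [distinctsAbove, staircaseDistinctsAbove, mem_filter, mem_univ, true_and,
    staircase_le_iff] at hd hs
  have h1 := hs.1 1 (mem_Ioc.mpr ⟨Nat.one_pos, hk⟩)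
  have := hd 1 (Multiset.count_pos.mp (by omega)) Nat.one_pos
  omega

theorem disjoint_staircaseDistinctsAbove {m k k' : ℕ} (h : k + 1 < k') :
    Disjoint (staircaseDistinctsAbove m k) (staircaseDistinctsAbove m k') := by
  refine disjoint_left.mpr fun p hs hs' => ?_
  simp only [staircaseDistinctsAbove, mem_filter, mem_univ, true_and, staircase_le_iff] at hs hs'
  have h1 := hs'.1 k' (mem_Ioc.mpr ⟨by omega, le_rfl⟩)
  have := hs.2 k' (Multiset.count_pos.mp (by omega)) h
  omega

end Nat.Partition

open Nat.Partition

section Factor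

variable (R : Type*) [CommRing R] [TopologicalSpace R]

noncomputable def distinctsAboveFactor (k i : ℕ) : R⟦X⟧ :=
  if i ≤ k then ∑' c, (X ^ i) ^ c else 1 + X ^ i

variable [IsTopologicalRing R] [T2Space R]

theorem hasProd_distinctsAboveFactor (k : ℕ) :
    HasProd (fun i => distinctsAboveFactor R k (i + 1))
      (PowerSeries.mk fun n => (#(distinctsAbove n k) : R)) := by
  convert! hasProd_genFun (fun i c => if i ≤ k ∨ c ≤ 1 then (1 : R) else 0) using 1
  · ext1 i
    rw [distinctsAboveFactor]
    split_ifs with h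
    · rw [tsum_eq_zero_add' ?_]
      · simp [h, pow_mul]
      · exact (summable_nat_add_iff 1).mpr
          (WithPiTopology.summable_pow_of_constantCoeff_eq_zero (by simp))
    · rw [tsum_eq_single 0 fun c hc => by simp [h, hc]]
      simp
  · simp_rw [genFun, distinctsAbove, card_filter, Finsupp.prod, prod_boole]
    simp [or_iff_not_imp_left]

theorem X_pow_dvd_distinctsAboveFactor_sub_one (k i : ℕ) :
    (X : R⟦X⟧) ^ i ∣ distinctsAboveFactor R k i - 1 := by
  rcases Nat.eq_zero_or_pos i with rfl | hi
  · exact pow_zero (X : R⟦X⟧) ▸ one_dvd _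
  rw [distinctsAboveFactor]
  split_ifs
  · have hgeom := WithPiTopology.one_sub_mul_tsum_pow_of_constantCoeff_eq_zero
      (f := (X : R⟦X⟧) ^ i) (by simp [hi.ne'])
    exact ⟨∑' c, (X ^ i) ^ c, by linear_combination hgeom⟩
  · exact ⟨1, by ring⟩

theorem distinctsAboveFactor_mul_one_sub_X_pow (k : ℕ) {i : ℕ} (hi : 0 < i) :
    distinctsAboveFactor R k i * (1 - X ^ i) = if i ≤ k then 1 else 1 - X ^ (2 * i) := by
  rw [distinctsAboveFactor]
  split_ifs
  · exact WithPiTopology.tsum_pow_mul_one_sub_of_constantCoeff_eq_zero (by simp [hi.ne'])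
  · ring

theorem prod_distinctsAboveFactor_mul_prod_one_sub_X_pow (k n : ℕ) :
    (∏ i ∈ Ioc 0 n, distinctsAboveFactor R k i) * ∏ i ∈ Ioc 0 n, (1 - X ^ i) =
      ∏ i ∈ Ioc k n, (1 - X ^ (2 * i)) := by
  rw [← prod_mul_distrib, prod_congr rfl fun i hi =>
    distinctsAboveFactor_mul_one_sub_X_pow R k (mem_Ioc.mp hi).1]
  rw [prod_ite, prod_const_one, one_mul]
  congr 1
  ext i
  simp only [mem_filter, mem_Ioc]
  omega

end Factor

theorem X_pow_dvd_mk_card_distinctsAbove_sub_prod (R : Type*) [CommRing R] [TopologicalSpace R]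
    [DiscreteTopology R] (k n : ℕ) :
    (X : R⟦X⟧) ^ (n + 1) ∣ PowerSeries.mk (fun m => (#(distinctsAbove m k) : R)) -
      ∏ i ∈ Ioc 0 n, distinctsAboveFactor R k i := by
  have h := X_pow_dvd_sub_prod_range_of_hasProd (hasProd_distinctsAboveFactor R k)
    (fun i => X_pow_dvd_distinctsAboveFactor_sub_one R k (i + 1)) n
  rw [range_eq_Ico, prod_Ico_add' (distinctsAboveFactor R k)] at h
  rwa [← Ico_add_one_add_one_eq_Ioc]

theorem mem_distinctsAbove_zero_iff {m : ℕ} (p : m.Partition) :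
    p ∈ distinctsAbove m 0 ↔ ∀ k, mult p k ≤ 1 := by
  simp only [distinctsAbove, mem_filter, mem_univ, true_and, mult]
  refine ⟨fun h k => ?_, fun h i _ _ => h i⟩
  by_cases hk : k ∈ p.parts
  · exact h k hk (p.parts_pos hk)
  · rw [Multiset.count_eq_zero.mpr hk]
    exact Nat.zero_le 1

theorem mem_staircaseDistinctsAbove_iff {m j : ℕ} (hj : 1 ≤ j) (p : m.Partition) :
    p ∈ staircaseDistinctsAbove m (2 * j - 1) ↔ 2 ≤ mult p (2 * j - 1) ∧
      (∀ i, 1 ≤ i → i < 2 * j - 1 → 2 ≤ mult p i) ∧ ∀ k, 2 * j < k → mult p k ≤ 1 := by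
  simp only [staircaseDistinctsAbove, mem_filter, mem_univ, true_and, staircase_le_iff, mem_Ioc,
    mult, show 2 * j - 1 + 1 = 2 * j by omega]
  constructor
  · rintro ⟨hst, hhigh⟩
    refine ⟨hst _ ⟨by omega, le_rfl⟩, fun i h1 h2 => hst i ⟨h1, h2.le⟩, fun k hk => ?_⟩
    by_cases hkp : k ∈ p.parts
    · exact hhigh k hkp hk
    · rw [Multiset.count_eq_zero.mpr hkp]
      exact Nat.zero_le 1
  · rintro ⟨htop, hlow, hhigh⟩
    refine ⟨fun i hi => ?_, fun i _ hi => hhigh i hi⟩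
    rcases hi.2.lt_or_eq with hlt | rfl
    exacts [hlow i hi.1 hlt, htop]

theorem le_of_mem_staircaseDistinctsAbove {m j : ℕ} (hj : 1 ≤ j) {p : m.Partition}
    (hp : p ∈ staircaseDistinctsAbove m (2 * j - 1)) : j ≤ m := by
  have hsum := sum_le_of_le_parts p (mem_filter.mp hp).2.1
  rw [sum_staircase] at hsum
  have := le_choose_two_succ (2 * j - 1)
  omega

theorem c1_eq_card_add_sum {m N : ℕ} (hm : m ≤ N) :
    c1 m = #(distinctsAbove m 0) + ∑ j ∈ Icc 1 N, #(staircaseDistinctsAbove m (2 * j - 1)) := by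
  classical
  have hpair :
      (Icc 1 N : Set ℕ).PairwiseDisjoint fun j => staircaseDistinctsAbove m (2 * j - 1) := by
    intro j hj j' hj' hne
    simp only [coe_Icc, Set.mem_Icc] at hj hj'
    rcases Nat.lt_or_gt_of_ne hne with h | h
    · exact disjoint_staircaseDistinctsAbove (by omega)
    · exact (disjoint_staircaseDistinctsAbove (by omega)).symm
  have hdisj : Disjoint (distinctsAbove m 0)
      ((Icc 1 N).biUnion fun j => staircaseDistinctsAbove m (2 * j - 1)) :=
    (disjoint_biUnion_right _ _ _).mpr fun j hj =>
      disjoint_distinctsAbove_zero_staircaseDistinctsAbove (by simp only [mem_Icc] at hj; omega)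
  rw [← card_biUnion hpair, ← card_union_of_disjoint hdisj, c1, Nat.card_eq_fintype_card,
    Fintype.card_subtype]
  congr 1
  ext p
  simp only [mem_filter, mem_univ, true_and, mem_union, mem_biUnion, mem_Icc,
    ← mem_distinctsAbove_zero_iff]
  refine or_congr_right ⟨fun ⟨j, hj, hp⟩ => ?_,
    fun ⟨j, ⟨hj, _⟩, hp⟩ => ⟨j, hj, (mem_staircaseDistinctsAbove_iff hj p).mp hp⟩⟩
  have hp := (mem_staircaseDistinctsAbove_iff hj p).mpr hp
  exact ⟨j, ⟨hj, (le_of_mem_staircaseDistinctsAbove hj hp).trans hm⟩, hp⟩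

theorem X_pow_dvd_mk_c1_sub (n : ℕ) :
    (X : ℤ⟦X⟧) ^ (n + 1) ∣ PowerSeries.mk (fun m => (c1 m : ℤ)) -
      (PowerSeries.mk (fun m => (#(distinctsAbove m 0) : ℤ)) +
        ∑ j ∈ Icc 1 n, X ^ (2 * (2 * j).choose 2) *
          PowerSeries.mk fun m => (#(distinctsAbove m (2 * j)) : ℤ)) := by
  have hstair : ∀ j ∈ Icc 1 n,
      X ^ (2 * (2 * j).choose 2) * PowerSeries.mk (fun m => (#(distinctsAbove m (2 * j)) : ℤ)) =
        PowerSeries.mk fun m => (#(staircaseDistinctsAbove m (2 * j - 1)) : ℤ) := fun j hj => by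
    have hj : 2 * j - 1 + 1 = 2 * j := by simp only [mem_Icc] at hj; omega
    rw [mk_card_staircaseDistinctsAbove, hj]
  rw [sum_congr rfl hstair]
  refine X_pow_dvd_iff.mpr fun m hm => ?_
  simp only [map_sub, map_add, map_sum, coeff_mk, c1_eq_card_add_sum (Nat.lt_succ_iff.mp hm)]
  push_cast
  ring

theorem X_pow_dvd_mk_c1_sub_prod (n : ℕ) :
    (X : ℤ⟦X⟧) ^ (n + 1) ∣ PowerSeries.mk (fun m => (c1 m : ℤ)) -
      (∏ i ∈ Ioc 0 n, distinctsAboveFactor ℤ 0 i + ∑ j ∈ Icc 1 n,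
        X ^ (2 * (2 * j).choose 2) * ∏ i ∈ Ioc 0 n, distinctsAboveFactor ℤ (2 * j) i) := by
  have hG (k : ℕ) := X_pow_dvd_mk_card_distinctsAbove_sub_prod ℤ k n
  convert dvd_add (dvd_add (X_pow_dvd_mk_c1_sub n) (hG 0))
    (dvd_sum fun j _ => (hG (2 * j)).mul_left (X ^ (2 * (2 * j).choose 2))) using 1
  simp only [mul_sub, sum_sub_distrib]
  ring

/-- Stated coefficientwise after multiplying through by `(q;q)_∞`: only the factors with index
`≤ n` can affect the `n`-th coefficient, so truncated products capture the full identity. -/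
theorem c1_generating_function (n : ℕ) :
    PowerSeries.coeff (R := ℤ) n
      (PowerSeries.mk (fun m => (c1 m : ℤ)) * ∏ k ∈ Finset.Icc 1 n, (1 - (X : ℤ⟦X⟧) ^ k)) =
    PowerSeries.coeff (R := ℤ) n (∏ k ∈ Finset.Icc 1 n, (1 - (X : ℤ⟦X⟧) ^ (4 * k))) := by
  rw [← zero_add 1, Icc_add_one_left_eq_Ioc]
  refine coeff_eq_of_X_pow_dvd_sub ?_
  have h := dvd_sub ((X_pow_dvd_mk_c1_sub_prod n).mul_right (∏ i ∈ Ioc 0 n, (1 - (X : ℤ⟦X⟧) ^ i)))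
    (X_pow_dvd_prod_one_sub_X_pow_four_mul_sub n)
  simp only [sub_mul, add_mul, sum_mul, mul_assoc,
    prod_distinctsAboveFactor_mul_prod_one_sub_X_pow] at h
  convert h using 1
  ring
end

section
/- As formal power series modulo 2, (q;q)_∞ · ∑_{n≥0} q^{n(n+1)}/(q²;q²)_n ≡ ∑_{n∈ℤ} q^{2n²+n} (mod 2). -/
/-!
Over `𝔽₂` every factor `1 - x` equals `1 + x` and squaring is additive, so
`(X;X)_∞ (X²;X²)_∞ = (X;X²)_∞ (X²;X²)_∞² ≡ (X;X⁴)_∞ (X³;X⁴)_∞ (X⁴;X⁴)_∞`.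
The rest comes from the finite `q`-binomial theorem
`∏_{i<M} (a + b qⁱ) = ∑ₙ a^(M-n) bⁿ q^(n(n-1)/2) [M, n]_q` together with
`[M, n]_q (q;q)ₙ ≡ 1` modulo `q^(M-n+1)`.
With `q = b = X²`, `a = 1` it gives Euler's `∑ X^(n(n+1)) / (X²;X²)ₙ ≡ ∏ (1 + X^(2k))`.
With `q = b = X⁴`, `a = X^(4N+1)` it gives a finite Jacobi triple product
`∏_{k<N} (1 + X^(4k+1)) (1 + X^(4k+3)) = ∑_{|j| ≤ N} X^(2j²+j) [2N, N+j]_{X⁴}`,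
and multiplying by `(X⁴;X⁴)_N` turns every Gaussian binomial into `1`, leaving `∑ X^(2j²+j)`.
All congruences are taken modulo `X^(m+1)`, where the finite products and sums agree with
the infinite ones.
-/

open PowerSeries Finset

lemma Finset.prod_range_two_mul {M : Type*} [CommMonoid M] (f : ℕ → M) (n : ℕ) :
    ∏ i ∈ range (2 * n), f i = ∏ i ∈ range n, (f (2 * i) * f (2 * i + 1)) := by
  induction n with
  | zero => simp
  | succ n ih =>
    rw [show 2 * (n + 1) = 2 * n + 1 + 1 by ring, prod_range_succ, prod_range_succ,
      prod_range_succ, ih, mul_assoc]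

lemma Nat.choose_two_succ (n : ℕ) : (n + 1).choose 2 = n.choose 2 + n := by
  rw [Nat.choose_succ_succ, Nat.choose_one_right, add_comm]

lemma Nat.choose_two_mul_two_add_self (n : ℕ) : n.choose 2 * 2 + n = n * n := by
  induction n with
  | zero => rfl
  | succ n ih => rw [Nat.choose_two_succ]; nlinarith [ih]

section ModPow

variable {A : Type*} [CommRing A] {q : A}

lemma SModEq.span_pow_mono {x y : A} {r s : ℕ} (hxy : x ≡ y [SMOD Ideal.span {q ^ r}])
    (h : s ≤ r) : x ≡ y [SMOD Ideal.span {q ^ s}] :=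
  hxy.mono (Ideal.span_singleton_le_span_singleton.2 (pow_dvd_pow q h))

lemma SModEq.pow_mul_span_pow {x y : A} {r : ℕ} (hxy : x ≡ y [SMOD Ideal.span {q ^ r}])
    (a : ℕ) : q ^ a * x ≡ q ^ a * y [SMOD Ideal.span {q ^ (a + r)}] := by
  rw [SModEq.sub_mem, Ideal.mem_span_singleton, ← mul_sub, pow_add] at *
  exact mul_dvd_mul_left _ hxy

lemma pow_modEq_zero {r e : ℕ} (h : r ≤ e) : q ^ e ≡ 0 [SMOD Ideal.span {q ^ r}] :=
  SModEq.zero.2 (Ideal.mem_span_singleton.2 (pow_dvd_pow q h))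

lemma one_sub_pow_modEq {r e : ℕ} (h : r ≤ e) : 1 - q ^ e ≡ 1 [SMOD Ideal.span {q ^ r}] := by
  simpa using (SModEq.refl (1 : A)).sub (pow_modEq_zero h)

lemma prod_range_modEq_of_le {I : Ideal A} (f : ℕ → A) {r n : ℕ} (hrn : r ≤ n)
    (h : ∀ i, r ≤ i → f i ≡ 1 [SMOD I]) : ∏ i ∈ range n, f i ≡ ∏ i ∈ range r, f i [SMOD I] := by
  rw [← prod_range_mul_prod_Ico f hrn]
  calc (∏ i ∈ range r, f i) * ∏ i ∈ Ico r n, f i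
      ≡ (∏ i ∈ range r, f i) * ∏ i ∈ Ico r n, 1 [SMOD I] :=
        SModEq.rfl.mul (SModEq.prod fun i hi => h i (mem_Ico.1 hi).1)
    _ = ∏ i ∈ range r, f i := by rw [prod_const_one, mul_one]

end ModPow

section GaussBinom

variable {A : Type*} [CommRing A]

def qPochhammer (q : A) (n : ℕ) : A := ∏ i ∈ range n, (1 - q ^ (i + 1))

def gaussBinom (q : A) : ℕ → ℕ → A
  | _, 0 => 1
  | 0, _ + 1 => 0
  | M + 1, n + 1 => gaussBinom q M n + q ^ (n + 1) * gaussBinom q M (n + 1)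

variable (q : A)

lemma qPochhammer_succ (n : ℕ) :
    qPochhammer q (n + 1) = qPochhammer q n * (1 - q ^ (n + 1)) :=
  prod_range_succ _ n

lemma qPochhammer_eq_prod_Icc (n : ℕ) : qPochhammer q n = ∏ k ∈ Icc 1 n, (1 - q ^ k) := by
  rw [qPochhammer, range_eq_Ico, prod_Ico_add' (fun k => 1 - q ^ k), zero_add,
    Ico_add_one_right_eq_Icc]

lemma qPochhammer_two_mul (n : ℕ) :
    qPochhammer q (2 * n) = (∏ i ∈ range n, (1 - q ^ (2 * i + 1))) * qPochhammer (q ^ 2) n := by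
  rw [qPochhammer, prod_range_two_mul, prod_mul_distrib, qPochhammer]
  congr 1
  exact prod_congr rfl fun i _ => by ring

lemma qPochhammer_eq_prod_one_add [CharP A 2] (n : ℕ) :
    qPochhammer q n = ∏ i ∈ range n, (1 + q ^ (i + 1)) := by
  simp only [qPochhammer, CharTwo.sub_eq_add]

lemma qPochhammer_sq [CharP A 2] (n : ℕ) : qPochhammer q n ^ 2 = qPochhammer (q ^ 2) n := by
  rw [qPochhammer, ← prod_pow, qPochhammer]
  exact prod_congr rfl fun i _ => by rw [sub_pow_char, one_pow, pow_right_comm]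

@[simp] lemma gaussBinom_zero_right (M : ℕ) : gaussBinom q M 0 = 1 := by cases M <;> rfl

lemma gaussBinom_succ_succ (M n : ℕ) :
    gaussBinom q (M + 1) (n + 1) = gaussBinom q M n + q ^ (n + 1) * gaussBinom q M (n + 1) :=
  rfl

lemma gaussBinom_eq_zero_of_lt {M n : ℕ} (h : M < n) : gaussBinom q M n = 0 := by
  induction M generalizing n with
  | zero => obtain ⟨n, rfl⟩ := Nat.exists_eq_add_one.2 h; rfl
  | succ M ih =>
    obtain ⟨n, rfl⟩ := Nat.exists_eq_add_one.2 (Nat.zero_lt_of_lt h)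
    rw [gaussBinom_succ_succ, ih (by omega), ih (by omega), mul_zero, add_zero]

theorem prod_add_mul_pow_eq_sum_gaussBinom (a b : A) (M : ℕ) :
    ∏ i ∈ range M, (a + b * q ^ i) =
      ∑ n ∈ range (M + 1), a ^ (M - n) * b ^ n * q ^ n.choose 2 * gaussBinom q M n := by
  induction M generalizing b with
  | zero => simp
  | succ M ih =>
    have hshift : ∏ i ∈ range M, (a + b * q ^ (i + 1)) = ∏ i ∈ range M, (a + b * q * q ^ i) := by
      simp_rw [pow_succ', mul_assoc]
    have hlow : ∑ n ∈ range (M + 1), a ^ (M - n) * b ^ (n + 1) * q ^ (n + 1).choose 2 *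
        gaussBinom q M n = b * ∑ n ∈ range (M + 1), a ^ (M - n) * (b * q) ^ n *
        q ^ n.choose 2 * gaussBinom q M n := by
      rw [mul_sum]
      refine sum_congr rfl fun n _ => ?_
      rw [Nat.choose_two_succ]; ring
    have hhigh : ∑ n ∈ range (M + 1), a ^ (M - n) * b ^ (n + 1) * q ^ (n + 1).choose 2 *
        (q ^ (n + 1) * gaussBinom q M (n + 1)) + a ^ (M + 1) = a * ∑ n ∈ range (M + 1),
        a ^ (M - n) * (b * q) ^ n * q ^ n.choose 2 * gaussBinom q M n := by
      rw [sum_range_succ, gaussBinom_eq_zero_of_lt q (Nat.lt_succ_self M), mul_zero, mul_zero,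
        add_zero, sum_range_succ' _ M, mul_add, mul_sum]
      simp only [Nat.choose_zero_succ, pow_zero, Nat.sub_zero, gaussBinom_zero_right]
      congr 1
      · refine sum_congr rfl fun n hn => ?_
        rw [show M - n = M - (n + 1) + 1 by have := mem_range.1 hn; omega, Nat.choose_two_succ]
        ring
      · ring
    rw [prod_range_succ', pow_zero, mul_one, hshift, ih, sum_range_succ' _ (M + 1)]
    simp only [gaussBinom_succ_succ, Nat.add_sub_add_right, mul_add, sum_add_distrib,
      Nat.choose_zero_succ, pow_zero, Nat.sub_zero, gaussBinom_zero_right, mul_one]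
    rw [add_assoc, hhigh, hlow]
    ring

variable {q}

lemma qPochhammer_modEq {r n : ℕ} (h : r ≤ n) :
    qPochhammer q n ≡ qPochhammer q r [SMOD Ideal.span {q ^ (r + 1)}] :=
  prod_range_modEq_of_le _ h fun _ hi => one_sub_pow_modEq (by omega)

lemma gaussBinom_mul_qPochhammer_modEq {M n : ℕ} (h : n ≤ M) :
    gaussBinom q M n * qPochhammer q n ≡ 1 [SMOD Ideal.span {q ^ (M - n + 1)}] := by
  induction M generalizing n with
  | zero =>
    obtain rfl : n = 0 := by omega
    simp [qPochhammer]
  | succ M ih =>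
    cases n with
    | zero => simp [qPochhammer]
    | succ n =>
      have hlow : gaussBinom q M n * qPochhammer q n * (1 - q ^ (n + 1)) ≡ 1 * (1 - q ^ (n + 1))
          [SMOD Ideal.span {q ^ (M - n + 1)}] := (ih (by omega)).mul SModEq.rfl
      have hhigh : q ^ (n + 1) * (gaussBinom q M (n + 1) * qPochhammer q (n + 1)) ≡ q ^ (n + 1)
          [SMOD Ideal.span {q ^ (M - n + 1)}] := by
        rcases Nat.lt_or_ge M (n + 1) with hM | hM
        · rw [gaussBinom_eq_zero_of_lt q hM, zero_mul, mul_zero]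
          exact (pow_modEq_zero (by omega)).symm
        · simpa using ((ih hM).pow_mul_span_pow (n + 1)).span_pow_mono (by omega)
      calc gaussBinom q (M + 1) (n + 1) * qPochhammer q (n + 1)
          = gaussBinom q M n * qPochhammer q n * (1 - q ^ (n + 1))
            + q ^ (n + 1) * (gaussBinom q M (n + 1) * qPochhammer q (n + 1)) := by
            rw [gaussBinom_succ_succ, qPochhammer_succ]; ring
        _ ≡ 1 * (1 - q ^ (n + 1)) + q ^ (n + 1)
            [SMOD Ideal.span {q ^ (M + 1 - (n + 1) + 1)}] := by
            simpa using hlow.add hhigh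
        _ = 1 := by ring

lemma gaussBinom_mul_qPochhammer_modEq_of_le {M n r s : ℕ} (hn : n ≤ M) (hrn : r ≤ n)
    (hrM : r ≤ M - n) (hrs : r ≤ s) :
    gaussBinom q M n * qPochhammer q s ≡ 1 [SMOD Ideal.span {q ^ (r + 1)}] :=
  calc gaussBinom q M n * qPochhammer q s
      ≡ gaussBinom q M n * qPochhammer q n [SMOD Ideal.span {q ^ (r + 1)}] :=
        SModEq.rfl.mul ((qPochhammer_modEq hrs).trans (qPochhammer_modEq hrn).symm)
    _ ≡ 1 [SMOD Ideal.span {q ^ (r + 1)}] :=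
        (gaussBinom_mul_qPochhammer_modEq hn).span_pow_mono (by omega)

end GaussBinom

section PowerSeries

variable {R : Type*} [CommRing R]

instance (p : ℕ) [CharP R p] : CharP R⟦X⟧ p := charP_of_injective_ringHom C_injective p

lemma coeff_eq_of_modEq {m : ℕ} {f g : R⟦X⟧}
    (h : f ≡ g [SMOD Ideal.span {(X : R⟦X⟧) ^ (m + 1)}]) : coeff m f = coeff m g := by
  rw [SModEq.sub_mem, Ideal.mem_span_singleton, X_pow_dvd_iff] at h
  simpa [sub_eq_zero] using h m (Nat.lt_succ_self m)

lemma constantCoeff_qPochhammer_X_pow {c : ℕ} (hc : c ≠ 0) (n : ℕ) :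
    constantCoeff (qPochhammer (X ^ c : R⟦X⟧) n) = 1 := by
  simp [qPochhammer, hc]

lemma gaussBinom_X_pow_modEq_inv {K : Type*} [Field K] {c M n : ℕ} (hc : c ≠ 0) (h : n ≤ M) :
    gaussBinom (X ^ c : K⟦X⟧) M n ≡ (qPochhammer (X ^ c) n)⁻¹
      [SMOD Ideal.span {(X ^ c : K⟦X⟧) ^ (M - n + 1)}] := by
  have hinv := PowerSeries.mul_inv_cancel (qPochhammer (X ^ c : K⟦X⟧) n)
    (by rw [constantCoeff_qPochhammer_X_pow hc]; exact one_ne_zero)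
  calc gaussBinom (X ^ c) M n
      = gaussBinom (X ^ c) M n * qPochhammer (X ^ c) n * (qPochhammer (X ^ c) n)⁻¹ := by
        rw [mul_assoc, hinv, mul_one]
    _ ≡ 1 * (qPochhammer (X ^ c) n)⁻¹ [SMOD Ideal.span {(X ^ c : K⟦X⟧) ^ (M - n + 1)}] :=
        (gaussBinom_mul_qPochhammer_modEq h).mul SModEq.rfl
    _ = (qPochhammer (X ^ c) n)⁻¹ := one_mul _

theorem sum_X_pow_mul_inv_qPochhammer_modEq {K : Type*} [Field K] (m : ℕ) :
    ∑ n ∈ range (m + 1), X ^ (n * (n + 1)) * (qPochhammer (X ^ 2 : K⟦X⟧) n)⁻¹ ≡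
      ∏ i ∈ range m, (1 + X ^ (2 * (i + 1))) [SMOD Ideal.span {(X : K⟦X⟧) ^ (m + 1)}] := by
  have hprod : ∏ i ∈ range m, (1 + X ^ (2 * (i + 1)) : K⟦X⟧) =
      ∏ i ∈ range m, (1 + X ^ 2 * (X ^ 2) ^ i) := prod_congr rfl fun i _ => by ring
  rw [hprod, prod_add_mul_pow_eq_sum_gaussBinom]
  refine SModEq.sum fun n hn => ?_
  have hn' : n ≤ m := Nat.lt_succ_iff.1 (mem_range.1 hn)
  have h := (gaussBinom_X_pow_modEq_inv (K := K) two_ne_zero hn').symm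
  rw [← pow_mul] at h
  have hexp : n * (n + 1) = 2 * n + 2 * n.choose 2 := by
    nlinarith [Nat.choose_two_mul_two_add_self n]
  calc X ^ (n * (n + 1)) * (qPochhammer (X ^ 2) n)⁻¹
      ≡ X ^ (n * (n + 1)) * gaussBinom (X ^ 2) m n [SMOD Ideal.span {(X : K⟦X⟧) ^ (m + 1)}] :=
        (h.pow_mul_span_pow _).span_pow_mono (by zify [hn']; nlinarith)
    _ = 1 ^ (m - n) * (X ^ 2) ^ n * (X ^ 2) ^ n.choose 2 * gaussBinom (X ^ 2) m n := by
        rw [hexp, one_pow, one_mul, ← pow_mul, ← pow_mul, ← pow_add]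

lemma prod_X_pow_four_mul_succ (N : ℕ) :
    ∏ i ∈ range N, (X : R⟦X⟧) ^ (4 * (i + 1)) = X ^ (2 * N * (N + 1)) := by
  induction N with
  | zero => simp
  | succ N ih => rw [prod_range_succ, ih, ← pow_add]; ring_nf

lemma tripleProduct_exponent_eq {N n : ℕ} (hn : n ≤ 2 * N) :
    (4 * N + 1) * (2 * N - n) + (4 * n + 4 * n.choose 2) =
      2 * N * (N + 1) + (4 * N + 1) * N + (2 * ((n : ℤ) - N) ^ 2 + ((n : ℤ) - N)).toNat := by
  have hC := Nat.choose_two_mul_two_add_self n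
  have he : 0 ≤ 2 * ((n : ℤ) - N) ^ 2 + ((n : ℤ) - N) := by
    nlinarith [sq_nonneg (4 * ((n : ℤ) - N) + 1)]
  zify [hn] at hC ⊢
  rw [Int.toNat_of_nonneg he]
  linear_combination 2 * hC

theorem prod_one_add_X_pow_eq_sum_gaussBinom (N : ℕ) :
    ∏ i ∈ range N, ((1 + X ^ (4 * i + 1)) * (1 + X ^ (4 * i + 3)) : R⟦X⟧) =
      ∑ j ∈ Icc (-(N : ℤ)) N,
        X ^ (2 * j ^ 2 + j).toNat * gaussBinom (X ^ 4) (2 * N) (N + j).toNat := by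
  have hlow : ∀ i ∈ range N, (X : R⟦X⟧) ^ (4 * N + 1) + X ^ 4 * (X ^ 4) ^ i =
      X ^ (4 * (i + 1)) * (1 + X ^ (4 * (N - 1 - i) + 1)) := fun i hi => by
    obtain ⟨k, rfl⟩ := Nat.exists_eq_add_of_lt (mem_range.1 hi)
    rw [show i + k + 1 - 1 - i = k by omega]
    ring
  have hhigh : ∀ i ∈ range N, (X : R⟦X⟧) ^ (4 * N + 1) + X ^ 4 * (X ^ 4) ^ (N + i) =
      X ^ (4 * N + 1) * (1 + X ^ (4 * i + 3)) := fun i _ => by ring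
  have hprod : ∏ i ∈ range (2 * N), ((X : R⟦X⟧) ^ (4 * N + 1) + X ^ 4 * (X ^ 4) ^ i) =
      X ^ (2 * N * (N + 1) + (4 * N + 1) * N) *
        ∏ i ∈ range N, ((1 + X ^ (4 * i + 1)) * (1 + X ^ (4 * i + 3))) := by
    rw [two_mul, prod_range_add, prod_congr rfl hlow, prod_congr rfl hhigh, prod_mul_distrib,
      prod_mul_distrib, prod_X_pow_four_mul_succ, prod_range_reflect (fun i => 1 + X ^ (4 * i + 1)),
      prod_const, card_range, ← pow_mul, prod_mul_distrib]
    ring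
  have hsum : ∑ n ∈ range (2 * N + 1), ((X : R⟦X⟧) ^ (4 * N + 1)) ^ (2 * N - n) * (X ^ 4) ^ n *
        (X ^ 4) ^ n.choose 2 * gaussBinom (X ^ 4) (2 * N) n =
      X ^ (2 * N * (N + 1) + (4 * N + 1) * N) * ∑ j ∈ Icc (-(N : ℤ)) N,
        X ^ (2 * j ^ 2 + j).toNat * gaussBinom (X ^ 4) (2 * N) (N + j).toNat := by
    rw [mul_sum]
    refine sum_nbij' (fun n => (n : ℤ) - N) (fun j => (N + j).toNat) ?_ ?_ ?_ ?_ ?_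
    · intro n hn; simp only [mem_range, mem_Icc] at hn ⊢; omega
    · intro j hj; simp only [mem_range, mem_Icc] at hj ⊢; omega
    · intro n _; simp
    · intro j hj; simp only [mem_Icc] at hj; omega
    · intro n hn
      have hn' : n ≤ 2 * N := Nat.lt_succ_iff.1 (mem_range.1 hn)
      rw [show ((N : ℤ) + ((n : ℤ) - N)).toNat = n by omega, ← mul_assoc, ← pow_add,
        ← tripleProduct_exponent_eq hn']
      ring
  rw [← X_pow_mul_inj (k := 2 * N * (N + 1) + (4 * N + 1) * N), ← hprod, ← hsum,
    prod_add_mul_pow_eq_sum_gaussBinom]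

lemma prod_one_sub_X_pow_two_mul_add_one_modEq [CharP R 2] (m : ℕ) :
    ∏ i ∈ range m, (1 - X ^ (2 * i + 1) : R⟦X⟧) ≡
      ∏ i ∈ range m, ((1 + X ^ (4 * i + 1)) * (1 + X ^ (4 * i + 3)))
      [SMOD Ideal.span {(X : R⟦X⟧) ^ (m + 1)}] :=
  calc ∏ i ∈ range m, (1 - X ^ (2 * i + 1) : R⟦X⟧)
      ≡ ∏ i ∈ range (2 * m), (1 - X ^ (2 * i + 1)) [SMOD Ideal.span {(X : R⟦X⟧) ^ (m + 1)}] :=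
        (prod_range_modEq_of_le _ (by omega) fun _ hi => one_sub_pow_modEq (by omega)).symm
    _ = ∏ i ∈ range m, ((1 + X ^ (4 * i + 1)) * (1 + X ^ (4 * i + 3))) := by
        rw [prod_range_two_mul]
        exact prod_congr rfl fun i _ => by rw [CharTwo.sub_eq_add, CharTwo.sub_eq_add]; ring

lemma tripleProduct_exponent_bound {m : ℕ} {j : ℤ} (hj : j ∈ Icc (-(m : ℤ)) m) :
    m + 1 ≤ (2 * j ^ 2 + j).toNat + 4 * (m - j.natAbs + 1) := by
  rw [mem_Icc] at hj
  have he : 0 ≤ 2 * j ^ 2 + j := by nlinarith [sq_nonneg (4 * j + 1)]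
  have hm : j.natAbs ≤ m := by omega
  zify [hm]
  rw [Int.toNat_of_nonneg he]
  rcases abs_cases j with ⟨h, _⟩ | ⟨h, _⟩ <;> rw [h] <;> nlinarith

lemma X_pow_mul_gaussBinom_mul_qPochhammer_modEq {m : ℕ} {j : ℤ} (hj : j ∈ Icc (-(m : ℤ)) m) :
    X ^ (2 * j ^ 2 + j).toNat *
        (gaussBinom (X ^ 4 : R⟦X⟧) (2 * m) (m + j).toNat * qPochhammer (X ^ 4) m) ≡
      X ^ (2 * j ^ 2 + j).toNat [SMOD Ideal.span {(X : R⟦X⟧) ^ (m + 1)}] := by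
  have hj' := mem_Icc.1 hj
  have h := gaussBinom_mul_qPochhammer_modEq_of_le (q := (X ^ 4 : R⟦X⟧)) (M := 2 * m)
    (n := (m + j).toNat) (r := m - j.natAbs) (s := m) (by omega) (by omega) (by omega) (by omega)
  rw [← pow_mul] at h
  simpa using (h.pow_mul_span_pow _).span_pow_mono (tripleProduct_exponent_bound hj)

lemma coeff_sum_X_pow_eq_ncard (m : ℕ) :
    coeff m (∑ j ∈ Icc (-(m : ℤ)) m, X ^ (2 * j ^ 2 + j).toNat : R⟦X⟧) =
      ({k : ℤ | 2 * k ^ 2 + k = m}.ncard : R) := by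
  have hset : {k : ℤ | 2 * k ^ 2 + k = m} =
      ↑{j ∈ Icc (-(m : ℤ)) m | m = (2 * j ^ 2 + j).toNat} := by
    ext k
    simp only [Set.mem_ofPred_eq, coe_filter, mem_Icc]
    constructor
    · intro h
      exact ⟨⟨by nlinarith, by nlinarith⟩, by omega⟩
    · rintro ⟨-, h⟩
      have he : 0 ≤ 2 * k ^ 2 + k := by nlinarith [sq_nonneg (4 * k + 1)]
      omega
  simp_rw [map_sum, coeff_X_pow]
  rw [sum_boole, hset, Set.ncard_coe_finset]

theorem qPochhammer_mul_sum_X_pow_mul_inv_qPochhammer_modEq {K : Type*} [Field K] [CharP K 2]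
    (m : ℕ) :
    qPochhammer (X : K⟦X⟧) m *
        ∑ n ∈ range (m + 1), X ^ (n * (n + 1)) * (qPochhammer (X ^ 2 : K⟦X⟧) n)⁻¹ ≡
      ∑ j ∈ Icc (-(m : ℤ)) m, X ^ (2 * j ^ 2 + j).toNat
      [SMOD Ideal.span {(X : K⟦X⟧) ^ (m + 1)}] := by
  have heuler := sum_X_pow_mul_inv_qPochhammer_modEq (K := K) m
  rw [show ∏ i ∈ range m, (1 + X ^ (2 * (i + 1)) : K⟦X⟧) = qPochhammer (X ^ 2) m by
    simp only [pow_mul, ← qPochhammer_eq_prod_one_add]] at heuler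
  have hsplit : qPochhammer X m *
        ∑ n ∈ range (m + 1), X ^ (n * (n + 1)) * (qPochhammer (X ^ 2 : K⟦X⟧) n)⁻¹ ≡
      (∏ i ∈ range m, (1 - X ^ (2 * i + 1))) * qPochhammer (X ^ 4) m
      [SMOD Ideal.span {(X : K⟦X⟧) ^ (m + 1)}] := by
    have h := (qPochhammer_modEq (q := (X : K⟦X⟧)) (show m ≤ 2 * m by omega)).symm.mul heuler
    rwa [qPochhammer_two_mul, mul_assoc, ← sq, qPochhammer_sq, ← pow_mul] at h
  refine (hsplit.trans ((prod_one_sub_X_pow_two_mul_add_one_modEq (R := K) m).mul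
    SModEq.rfl)).trans ?_
  rw [prod_one_add_X_pow_eq_sum_gaussBinom, sum_mul]
  exact SModEq.sum fun j hj => by
    rw [mul_assoc]; exact X_pow_mul_gaussBinom_mul_qPochhammer_modEq hj

end PowerSeries

/-- Only the factors `1 - X ^ k` with `k ≤ m` and the summands with `n ≤ m` affect the
`m`-th coefficient, so this truncated form is the full congruence. -/
theorem mod_two_identity_19 (m : ℕ) :
    PowerSeries.coeff (R := ZMod 2) m
      ((∏ k ∈ Finset.Icc 1 m, (1 - (X : (ZMod 2)⟦X⟧) ^ k)) *
        ∑ n ∈ Finset.range (m + 1),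
          (X : (ZMod 2)⟦X⟧) ^ (n * (n + 1)) *
            (∏ k ∈ Finset.Icc 1 n, (1 - (X : (ZMod 2)⟦X⟧) ^ (2 * k)))⁻¹) =
    ({k : ℤ | 2 * k ^ 2 + k = (m : ℤ)}.ncard : ZMod 2) := by
  simp only [pow_mul X 2, ← qPochhammer_eq_prod_Icc]
  rw [coeff_eq_of_modEq (qPochhammer_mul_sum_X_pow_mul_inv_qPochhammer_modEq m),
    coeff_sum_X_pow_eq_ncard]
end
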